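/- Let f be a function on the grid-cylinder [−ξ,d] (in z) with f(·,−ξ) = 0 and f_z(·,−ξ) = 0 at every grid point, and f(·,z) = 0 at boundary grid points for all z. Then the norm ‖f‖² := Σ_{j,s} h² ∫_{−ξ}^d |Δʰf(x_j,y_s,z)|² dz is equivalent to the full semidiscrete H² norm Σ_{j,s} h² ∫_{−ξ}^d (|f|² + |f_z|² + |f_zz|²) dz: there are constants c₁, c₂ > 0 (depending on ξ, d, h, N) with c₁‖f‖²_{H^{2,h}} ≤ ‖f‖² ≤ c₂‖f‖²_{H^{2,h}}. -/

import Mathlib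

/-!
Write `Δʰf = f_zz + L f / h²`, where `L` is the five-point stencil in the lateral variables.
On grid functions vanishing off the box, a shift does not increase the discrete `ℓ²` norm,
so `‖L f‖² ≤ 64 ‖f‖²` in every layer `z`. This gives the upper bound directly, and also
`‖f_zz‖² ≤ 2 ‖Δʰf‖² + (128 / h⁴) ‖f‖²`. Hence the layer energy `Φ = ‖f‖² + ‖f_z‖²`
satisfies `Φ' ≤ K Φ + 2 ‖Δʰf‖²` with `K = 2 + 128 / h⁴` and `Φ(−ξ) = 0`, so Gronwall's
inequality bounds `Φ` on `[−ξ, d]` by `2 e^{K (d + ξ)} ∫ ‖Δʰf‖²`. Integrating in `z` and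
using the bound on `‖f_zz‖²` once more controls the full `H²` norm.
-/

open intervalIntegral

/-- The semidiscrete Laplacian `Δʰf = f_zz + f_xxʰ + f_yyʰ`. -/
noncomputable def discLap (h : ℝ) (f fzz : ℤ → ℤ → ℝ → ℂ) (j s : ℤ) (z : ℝ) : ℂ :=
  fzz j s z
    + (f (j - 1) s z - 2 * f j s z + f (j + 1) s z) / (h : ℂ) ^ 2
    + (f j (s - 1) z - 2 * f j s z + f (j) (s + 1) z) / (h : ℂ) ^ 2

open Finset Real Set

section Grid

variable {E : Type*} (I : Finset ℤ)

noncomputable def gridNormSq [SeminormedAddCommGroup E] (u : ℤ → ℤ → E) : ℝ :=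
  ∑ j ∈ I, ∑ s ∈ I, ‖u j s‖ ^ 2

noncomputable def gridInner [NormedAddCommGroup E] [InnerProductSpace ℝ E]
    (u v : ℤ → ℤ → E) : ℝ :=
  ∑ j ∈ I, ∑ s ∈ I, inner ℝ (u j s) (v j s)

def gridLap [AddCommGroup E] (u : ℤ → ℤ → E) (j s : ℤ) : E :=
  (u (j - 1) s + u (j + 1) s) + (u j (s - 1) + u j (s + 1)) - 4 • u j s

lemma norm_add_sq_le [SeminormedAddCommGroup E] (x y : E) :
    ‖x + y‖ ^ 2 ≤ 2 * (‖x‖ ^ 2 + ‖y‖ ^ 2) :=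
  (pow_le_pow_left₀ (norm_nonneg _) (norm_add_le x y) 2).trans add_sq_le

lemma norm_sub_sq_le [SeminormedAddCommGroup E] (x y : E) :
    ‖x - y‖ ^ 2 ≤ 2 * (‖x‖ ^ 2 + ‖y‖ ^ 2) :=
  (pow_le_pow_left₀ (norm_nonneg _) (norm_sub_le x y) 2).trans add_sq_le

lemma sum_comp_add_le {α : Type*} [AddGroup α] {g : α → ℝ} {J : Finset α}
    (hg : ∀ j, 0 ≤ g j) (hJ : ∀ j ∉ J, g j = 0) (e : α) :
    ∑ j ∈ J, g (j + e) ≤ ∑ j ∈ J, g j := by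
  classical
  set T := J.map (Equiv.addRight e).toEmbedding
  calc ∑ j ∈ J, g (j + e) = ∑ j ∈ T, g j := (sum_map J (Equiv.addRight e).toEmbedding g).symm
    _ ≤ ∑ j ∈ T ∪ J, g j := sum_le_sum_of_subset_of_nonneg subset_union_left fun j _ _ => hg j
    _ = ∑ j ∈ J, g j := (sum_subset subset_union_right fun j _ hj => hJ j hj).symm

section Seminormed

variable [SeminormedAddCommGroup E]

lemma gridNormSq_nonneg (u : ℤ → ℤ → E) : 0 ≤ gridNormSq I u := by
  unfold gridNormSq; positivity

lemma gridNormSq_add_le (u v : ℤ → ℤ → E) :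
    gridNormSq I (u + v) ≤ 2 * (gridNormSq I u + gridNormSq I v) := by
  simp only [gridNormSq, ← sum_add_distrib, mul_sum]
  gcongr with j _ s _
  exact norm_add_sq_le _ _

lemma gridNormSq_sub_le (u v : ℤ → ℤ → E) :
    gridNormSq I (u - v) ≤ 2 * (gridNormSq I u + gridNormSq I v) := by
  simp only [gridNormSq, ← sum_add_distrib, mul_sum]
  gcongr with j _ s _
  exact norm_sub_sq_le _ _

lemma gridNormSq_nsmul_le (n : ℕ) (u : ℤ → ℤ → E) :
    gridNormSq I (n • u) ≤ n ^ 2 * gridNormSq I u := by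
  simp only [gridNormSq, mul_sum]
  gcongr with j _ s _
  rw [← mul_pow]
  exact pow_le_pow_left₀ (norm_nonneg _) norm_nsmul_le 2

variable {I} {u : ℤ → ℤ → E}

lemma gridNormSq_shift_le (hu : ∀ j s, (j ∉ I ∨ s ∉ I) → u j s = 0) (a b : ℤ) :
    gridNormSq I (fun j s => u (j + a) (s + b)) ≤ gridNormSq I u := by
  unfold gridNormSq
  calc ∑ j ∈ I, ∑ s ∈ I, ‖u (j + a) (s + b)‖ ^ 2
      ≤ ∑ j ∈ I, ∑ s ∈ I, ‖u (j + a) s‖ ^ 2 :=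
        sum_le_sum fun j _ => sum_comp_add_le (g := fun s => ‖u (j + a) s‖ ^ 2)
          (fun _ => by positivity)
          (fun s hs => by simp [hu _ s (Or.inr hs)]) b
    _ ≤ ∑ j ∈ I, ∑ s ∈ I, ‖u j s‖ ^ 2 :=
        sum_comp_add_le (g := fun j => ∑ s ∈ I, ‖u j s‖ ^ 2) (fun _ => by positivity)
          (fun j hj => sum_eq_zero fun s _ => by simp [hu j s (Or.inl hj)]) a

lemma gridNormSq_gridLap_le (hu : ∀ j s, (j ∉ I ∨ s ∉ I) → u j s = 0) :
    gridNormSq I (gridLap u) ≤ 64 * gridNormSq I u := by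
  have hshift := gridNormSq_shift_le hu
  have h₁ := hshift (-1) 0
  have h₂ := hshift 1 0
  have h₃ := hshift 0 (-1)
  have h₄ := hshift 0 1
  simp only [add_zero, ← sub_eq_add_neg] at h₁ h₂ h₃ h₄
  set x₁ : ℤ → ℤ → E := fun j s => u (j - 1) s
  set x₂ : ℤ → ℤ → E := fun j s => u (j + 1) s
  set x₃ : ℤ → ℤ → E := fun j s => u j (s - 1)
  set x₄ : ℤ → ℤ → E := fun j s => u j (s + 1)
  have hlap : gridLap u = (x₁ + x₂) + (x₃ + x₄) - 4 • u := rfl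
  have h₁₂ := gridNormSq_add_le I x₁ x₂
  have h₃₄ := gridNormSq_add_le I x₃ x₄
  have hsum := gridNormSq_add_le I (x₁ + x₂) (x₃ + x₄)
  have hdiff := gridNormSq_sub_le I ((x₁ + x₂) + (x₃ + x₄)) (4 • u)
  have h4 := gridNormSq_nsmul_le I 4 u
  rw [hlap]
  norm_num at h4
  linarith

end Seminormed

lemma gridNormSq_div {𝕜 : Type*} [NormedDivisionRing 𝕜] (u : ℤ → ℤ → 𝕜) (c : 𝕜) :
    gridNormSq I (fun j s => u j s / c) = gridNormSq I u / ‖c‖ ^ 2 := by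
  simp only [gridNormSq, norm_div, div_pow, sum_div]

section Inner

variable [NormedAddCommGroup E] [InnerProductSpace ℝ E]

lemma two_mul_gridInner_le (u v : ℤ → ℤ → E) :
    2 * gridInner I u v ≤ gridNormSq I u + gridNormSq I v := by
  simp only [gridInner, gridNormSq, mul_sum, ← sum_add_distrib]
  gcongr with j _ s _
  nlinarith [real_inner_le_norm (u j s) (v j s), two_mul_le_add_sq ‖u j s‖ ‖v j s‖]

lemma hasDerivAt_gridNormSq {u : ℤ → ℤ → ℝ → E} {u' : ℤ → ℤ → E} {z : ℝ}
    (hu : ∀ j s, HasDerivAt (u j s) (u' j s) z) :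
    HasDerivAt (fun z => gridNormSq I (u · · z)) (2 * gridInner I (u · · z) u') z := by
  simp only [gridNormSq, gridInner, mul_sum]
  exact HasDerivAt.fun_sum fun j _ => HasDerivAt.fun_sum fun s _ => (hu j s).norm_sq

end Inner

lemma continuous_gridNormSq [SeminormedAddCommGroup E] {u : ℤ → ℤ → ℝ → E}
    (hu : ∀ j s, Continuous (u j s)) : Continuous fun z => gridNormSq I (u · · z) := by
  unfold gridNormSq
  fun_prop

end Grid

lemma le_exp_mul_integral_of_hasDerivAt {Φ Φ' g : ℝ → ℝ} {a b K : ℝ} (hab : a ≤ b)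
    (hK : 0 ≤ K) (hΦ : ∀ x ∈ Icc a b, HasDerivAt Φ (Φ' x) x) (hg : ContinuousOn g (Icc a b))
    (hg₀ : ∀ x ∈ Icc a b, 0 ≤ g x) (hΦ' : ∀ x ∈ Ioo a b, Φ' x ≤ K * Φ x + g x)
    (ha : Φ a = 0) : Φ b ≤ exp (K * (b - a)) * ∫ x in a..b, g x := by
  -- the weight `exp (-K x)` turns `Φ' ≤ K Φ + g` into `(Φ e^{-Kx})' ≤ g e^{-Kx} ≤ g e^{-Ka}`
  have hw : ∀ x ∈ Icc a b, HasDerivAt (fun x => Φ x * exp (-(K * x)))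
      ((Φ' x - K * Φ x) * exp (-(K * x))) x := fun x hx =>
    ((hΦ x hx).fun_mul (((hasDerivAt_id' x).const_mul K).fun_neg.exp)).congr_deriv (by ring)
  have key := intervalIntegral.sub_le_integral_of_hasDeriv_right_of_le hab
    (fun x hx => (hw x hx).continuousAt.continuousWithinAt)
    (fun x hx => (hw x (Ioo_subset_Icc_self hx)).hasDerivWithinAt)
    ((hg.integrableOn_Icc).const_mul (exp (-(K * a))))
    (fun x hx => by
      have hΦ'x := hΦ' x hx
      have hg₀x := hg₀ x (Ioo_subset_Icc_self hx)
      have hexp : exp (-(K * x)) ≤ exp (-(K * a)) := by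
        gcongr; exact hx.1.le
      calc (Φ' x - K * Φ x) * exp (-(K * x)) ≤ g x * exp (-(K * x)) := by gcongr; linarith
        _ ≤ g x * exp (-(K * a)) := by gcongr
        _ = exp (-(K * a)) * g x := mul_comm _ _)
  rw [ha, zero_mul, sub_zero, intervalIntegral.integral_const_mul] at key
  calc Φ b = exp (K * b) * (Φ b * exp (-(K * b))) := by
        rw [mul_left_comm, ← exp_add, add_neg_cancel, exp_zero, mul_one]
    _ ≤ exp (K * b) * (exp (-(K * a)) * ∫ x in a..b, g x) := by gcongr
    _ = exp (K * (b - a)) * ∫ x in a..b, g x := by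
        rw [← mul_assoc, ← exp_add, mul_sub, sub_eq_add_neg]

lemma continuous_of_forall_hasDerivAt {E : Type*} [NormedAddCommGroup E] [NormedSpace ℝ E]
    {u u' : ℝ → E} (hu : ∀ z, HasDerivAt u (u' z) z) : Continuous u :=
  Differentiable.continuous fun z => (hu z).differentiableAt

section Layers

variable {h a b K : ℝ} {I : Finset ℤ} {f fz fzz : ℤ → ℤ → ℝ → ℂ}

lemma discLap_eq_add_gridLap (j s : ℤ) (z : ℝ) :
    discLap h f fzz j s z = fzz j s z + gridLap (f · · z) j s / (h : ℂ) ^ 2 := by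
  simp only [discLap, gridLap, nsmul_eq_mul]
  push_cast
  ring

lemma continuous_discLap (hf : ∀ j s, Continuous (f j s)) (hfzz : ∀ j s, Continuous (fzz j s))
    (j s : ℤ) : Continuous (discLap h f fzz j s) := by
  unfold discLap
  fun_prop

lemma gridNormSq_gridLap_div_le {z : ℝ} (hf : ∀ j s, (j ∉ I ∨ s ∉ I) → f j s z = 0) :
    gridNormSq I (fun j s => gridLap (f · · z) j s / (h : ℂ) ^ 2)
      ≤ 64 / h ^ 4 * gridNormSq I (f · · z) := by
  have hnorm : ‖(h : ℂ) ^ 2‖ ^ 2 = h ^ 4 := by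
    rw [norm_pow, Complex.norm_real, Real.norm_eq_abs, sq_abs]
    ring
  rw [gridNormSq_div, hnorm, div_mul_eq_mul_div]
  gcongr
  exact gridNormSq_gridLap_le hf

lemma gridNormSq_discLap_le {z : ℝ} (hf : ∀ j s, (j ∉ I ∨ s ∉ I) → f j s z = 0) :
    gridNormSq I (discLap h f fzz · · z)
      ≤ 2 * gridNormSq I (fzz · · z) + 128 / h ^ 4 * gridNormSq I (f · · z) := by
  have hsplit : (discLap h f fzz · · z)
      = (fzz · · z) + fun j s => gridLap (f · · z) j s / (h : ℂ) ^ 2 :=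
    funext₂ fun j s => discLap_eq_add_gridLap j s z
  rw [hsplit]
  calc _ ≤ 2 * (gridNormSq I (fzz · · z) + _) := gridNormSq_add_le I _ _
    _ ≤ 2 * (gridNormSq I (fzz · · z) + 64 / h ^ 4 * gridNormSq I (f · · z)) := by
        gcongr; exact gridNormSq_gridLap_div_le hf
    _ = _ := by ring

lemma gridNormSq_fzz_le {z : ℝ} (hf : ∀ j s, (j ∉ I ∨ s ∉ I) → f j s z = 0) :
    gridNormSq I (fzz · · z)
      ≤ 2 * gridNormSq I (discLap h f fzz · · z) + 128 / h ^ 4 * gridNormSq I (f · · z) := by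
  have hsplit : (fzz · · z)
      = (discLap h f fzz · · z) - fun j s => gridLap (f · · z) j s / (h : ℂ) ^ 2 :=
    funext₂ fun j s => eq_sub_of_add_eq (discLap_eq_add_gridLap j s z).symm
  rw [hsplit]
  calc _ ≤ 2 * (gridNormSq I (discLap h f fzz · · z) + _) := gridNormSq_sub_le I _ _
    _ ≤ 2 * (gridNormSq I (discLap h f fzz · · z) + 64 / h ^ 4 * gridNormSq I (f · · z)) := by
        gcongr; exact gridNormSq_gridLap_div_le hf
    _ = _ := by ring

lemma gridNormSq_add_le_exp_mul_integral (hK : 2 + 128 / h ^ 4 ≤ K)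
    (hf : ∀ j s z, HasDerivAt (f j s) (fz j s z) z)
    (hfz : ∀ j s z, HasDerivAt (fz j s) (fzz j s z) z) (hfzz : ∀ j s, Continuous (fzz j s))
    (hsupp : ∀ j s z, (j ∉ I ∨ s ∉ I) → f j s z = 0)
    (ha : ∀ j s, f j s a = 0) (haz : ∀ j s, fz j s a = 0) {z : ℝ} (hz : z ∈ Icc a b) :
    gridNormSq I (f · · z) + gridNormSq I (fz · · z)
      ≤ exp (K * (b - a)) * ∫ y in a..b, 2 * gridNormSq I (discLap h f fzz · · y) := by
  have hfc j s : Continuous (f j s) := continuous_of_forall_hasDerivAt (hf j s)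
  have hG : Continuous fun y => 2 * gridNormSq I (discLap h f fzz · · y) :=
    (continuous_gridNormSq I (continuous_discLap hfc hfzz)).const_mul 2
  have hG₀ y : 0 ≤ 2 * gridNormSq I (discLap h f fzz · · y) :=
    mul_nonneg zero_le_two (gridNormSq_nonneg I _)
  have hc : 0 ≤ 128 / h ^ 4 := by positivity
  have hK₀ : 0 ≤ K := by linarith
  have hderiv_le y : 2 * gridInner I (f · · y) (fz · · y) + 2 * gridInner I (fz · · y) (fzz · · y)
      ≤ K * (gridNormSq I (f · · y) + gridNormSq I (fz · · y))
        + 2 * gridNormSq I (discLap h f fzz · · y) := by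
    have h₀ := gridNormSq_nonneg I (f · · y)
    have h₁ := gridNormSq_nonneg I (fz · · y)
    have hf₀ := mul_le_mul_of_nonneg_right hK h₀
    have hfz₀ := mul_le_mul_of_nonneg_right (by linarith : 2 ≤ K) h₁
    linarith [two_mul_gridInner_le I (f · · y) (fz · · y),
      two_mul_gridInner_le I (fz · · y) (fzz · · y),
      gridNormSq_fzz_le (h := h) (fzz := fzz) (hsupp · · y)]
  have hgronwall := le_exp_mul_integral_of_hasDerivAt hz.1 hK₀
    (fun y _ => (hasDerivAt_gridNormSq I (hf · · y)).add (hasDerivAt_gridNormSq I (hfz · · y)))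
    hG.continuousOn (fun y _ => hG₀ y) (fun y _ => hderiv_le y) (by simp [gridNormSq, ha, haz])
  refine hgronwall.trans ?_
  refine mul_le_mul (exp_le_exp.2 <| mul_le_mul_of_nonneg_left (by linarith [hz.2]) hK₀)
    (integral_mono_interval le_rfl hz.1 hz.2 (.of_forall hG₀) (hG.intervalIntegrable a b))
    (integral_nonneg hz.1 fun y _ => hG₀ y) (exp_nonneg _)

lemma integral_gridNormSq_add_le (hab : a ≤ b) (hK : 2 + 128 / h ^ 4 ≤ K)
    (hf : ∀ j s z, HasDerivAt (f j s) (fz j s z) z)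
    (hfz : ∀ j s z, HasDerivAt (fz j s) (fzz j s z) z) (hfzz : ∀ j s, Continuous (fzz j s))
    (hsupp : ∀ j s z, (j ∉ I ∨ s ∉ I) → f j s z = 0)
    (ha : ∀ j s, f j s a = 0) (haz : ∀ j s, fz j s a = 0) :
    ∫ z in a..b, (gridNormSq I (f · · z) + gridNormSq I (fz · · z))
      ≤ (b - a) * (exp (K * (b - a)) * ∫ y in a..b, 2 * gridNormSq I (discLap h f fzz · · y)) := by
  have hΦ : Continuous fun z => gridNormSq I (f · · z) + gridNormSq I (fz · · z) :=
    (continuous_gridNormSq I fun j s => continuous_of_forall_hasDerivAt (hf j s)).add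
      (continuous_gridNormSq I fun j s => continuous_of_forall_hasDerivAt (hfz j s))
  have := integral_mono_on hab (hΦ.intervalIntegrable a b)
    (intervalIntegrable_const (μ := MeasureTheory.volume))
    fun z hz => gridNormSq_add_le_exp_mul_integral hK hf hfz hfzz hsupp ha haz hz
  rwa [intervalIntegral.integral_const, smul_eq_mul] at this

lemma integral_gridNormSq_le (hab : a ≤ b) (hK : 2 + 128 / h ^ 4 ≤ K)
    (hf : ∀ j s z, HasDerivAt (f j s) (fz j s z) z)
    (hfz : ∀ j s z, HasDerivAt (fz j s) (fzz j s z) z) (hfzz : ∀ j s, Continuous (fzz j s))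
    (hsupp : ∀ j s z, (j ∉ I ∨ s ∉ I) → f j s z = 0)
    (ha : ∀ j s, f j s a = 0) (haz : ∀ j s, fz j s a = 0) :
    ∫ z in a..b, (gridNormSq I (f · · z) + gridNormSq I (fz · · z) + gridNormSq I (fzz · · z))
      ≤ 2 * (1 + (b - a) * K * exp (K * (b - a)))
        * ∫ z in a..b, gridNormSq I (discLap h f fzz · · z) := by
  have hc : 0 ≤ 128 / h ^ 4 := by positivity
  have hK₀ : 0 ≤ K := by linarith
  have hfc j s : Continuous (f j s) := continuous_of_forall_hasDerivAt (hf j s)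
  have hfzc j s : Continuous (fz j s) := continuous_of_forall_hasDerivAt (hfz j s)
  have hΦ : Continuous fun z => gridNormSq I (f · · z) + gridNormSq I (fz · · z) :=
    (continuous_gridNormSq I hfc).add (continuous_gridNormSq I hfzc)
  have h₂ := continuous_gridNormSq I hfzz
  have hG := continuous_gridNormSq I (continuous_discLap (h := h) hfc hfzz)
  have hpoint z : gridNormSq I (f · · z) + gridNormSq I (fz · · z) + gridNormSq I (fzz · · z)
      ≤ K * (gridNormSq I (f · · z) + gridNormSq I (fz · · z))
        + 2 * gridNormSq I (discLap h f fzz · · z) := by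
    have hf₀ := mul_le_mul_of_nonneg_right (by linarith : 1 + 128 / h ^ 4 ≤ K)
      (gridNormSq_nonneg I (f · · z))
    have hfz₀ := mul_le_mul_of_nonneg_right (by linarith : 1 ≤ K) (gridNormSq_nonneg I (fz · · z))
    linarith [gridNormSq_fzz_le (h := h) (fzz := fzz) (hsupp · · z)]
  have henergy := integral_gridNormSq_add_le (h := h) hab hK hf hfz hfzz hsupp ha haz
  calc _ ≤ ∫ z in a..b, (K * (gridNormSq I (f · · z) + gridNormSq I (fz · · z))
          + 2 * gridNormSq I (discLap h f fzz · · z)) :=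
        integral_mono_on hab ((hΦ.add h₂).intervalIntegrable a b)
          ((hΦ.const_mul K |>.add (hG.const_mul 2)).intervalIntegrable a b)
          fun z _ => hpoint z
    _ = K * (∫ z in a..b, (gridNormSq I (f · · z) + gridNormSq I (fz · · z)))
          + ∫ z in a..b, 2 * gridNormSq I (discLap h f fzz · · z) := by
        rw [integral_add, integral_const_mul]
        exacts [(hΦ.const_mul K).intervalIntegrable a b,
          (hG.const_mul 2).intervalIntegrable a b]
    _ ≤ _ := by
        rw [integral_const_mul] at henergy ⊢
        linarith [mul_le_mul_of_nonneg_left henergy hK₀]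

lemma integral_gridNormSq_discLap_le (hab : a ≤ b) (hf : ∀ j s, Continuous (f j s))
    (hfz : ∀ j s, Continuous (fz j s)) (hfzz : ∀ j s, Continuous (fzz j s))
    (hsupp : ∀ j s z, (j ∉ I ∨ s ∉ I) → f j s z = 0) :
    ∫ z in a..b, gridNormSq I (discLap h f fzz · · z)
      ≤ (2 + 128 / h ^ 4)
        * ∫ z in a..b,
            (gridNormSq I (f · · z) + gridNormSq I (fz · · z) + gridNormSq I (fzz · · z)) := by
  rw [← integral_const_mul]
  refine integral_mono_on hab
    ((continuous_gridNormSq I (continuous_discLap hf hfzz)).intervalIntegrable a b)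
    ((((continuous_gridNormSq I hf).add (continuous_gridNormSq I hfz)).add
      (continuous_gridNormSq I hfzz)).const_mul _ |>.intervalIntegrable a b) fun z _ => ?_
  have hc : 0 ≤ 128 / h ^ 4 := by positivity
  have h₀ := gridNormSq_nonneg I (f · · z)
  have h₁ := gridNormSq_nonneg I (fz · · z)
  have h₂ := gridNormSq_nonneg I (fzz · · z)
  nlinarith [gridNormSq_discLap_le (h := h) (fzz := fzz) (hsupp · · z)]

end Layers

lemma sum_sum_mul_integral {ι κ : Type*} {J : Finset ι} {S : Finset κ} {q : ι → κ → ℝ → ℝ}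
    {a b : ℝ} (c : ℝ) (hq : ∀ j s, IntervalIntegrable (q j s) MeasureTheory.volume a b) :
    ∑ j ∈ J, ∑ s ∈ S, c * ∫ z in a..b, q j s z = c * ∫ z in a..b, ∑ j ∈ J, ∑ s ∈ S, q j s z := by
  calc ∑ j ∈ J, ∑ s ∈ S, c * ∫ z in a..b, q j s z
      = ∑ j ∈ J, c * ∫ z in a..b, ∑ s ∈ S, q j s z :=
        sum_congr rfl fun j _ => by rw [integral_finsetSum fun s _ => hq j s, mul_sum]
    _ = c * ∫ z in a..b, ∑ j ∈ J, ∑ s ∈ S, q j s z := by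
        rw [integral_finsetSum (f := fun j z => ∑ s ∈ S, q j s z)
          fun j _ => by simpa only [Finset.sum_fn] using IntervalIntegrable.sum S fun s _ => hq j s,
          mul_sum]

theorem discLap_norm_equiv_general (ξ d h : ℝ) (N : ℕ) (hξ : 0 < ξ) (hd : 0 < d) :
    ∃ c₁ > (0 : ℝ), ∃ c₂ > (0 : ℝ), ∀ f fz fzz : ℤ → ℤ → ℝ → ℂ,
      (∀ j s z, HasDerivAt (f j s) (fz j s z) z) →
      (∀ j s z, HasDerivAt (fz j s) (fzz j s z) z) →
      (∀ j s, Continuous (fzz j s)) →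
      (∀ j s z, (j ∉ Finset.Icc (1 : ℤ) (N : ℤ) ∨ s ∉ Finset.Icc (1 : ℤ) (N : ℤ)) →
        f j s z = 0) →
      (∀ j s, f j s (-ξ) = 0) → (∀ j s, fz j s (-ξ) = 0) →
      c₁ * (∑ j ∈ Finset.Icc (1 : ℤ) (N : ℤ), ∑ s ∈ Finset.Icc (1 : ℤ) (N : ℤ),
            h ^ 2 * ∫ z in (-ξ)..d,
              (‖f j s z‖ ^ 2 + ‖fz j s z‖ ^ 2
                + ‖fzz j s z‖ ^ 2)) ≤
        (∑ j ∈ Finset.Icc (1 : ℤ) (N : ℤ), ∑ s ∈ Finset.Icc (1 : ℤ) (N : ℤ),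
            h ^ 2 * ∫ z in (-ξ)..d, ‖discLap h f fzz j s z‖ ^ 2) ∧
      (∑ j ∈ Finset.Icc (1 : ℤ) (N : ℤ), ∑ s ∈ Finset.Icc (1 : ℤ) (N : ℤ),
            h ^ 2 * ∫ z in (-ξ)..d, ‖discLap h f fzz j s z‖ ^ 2) ≤
        c₂ * (∑ j ∈ Finset.Icc (1 : ℤ) (N : ℤ), ∑ s ∈ Finset.Icc (1 : ℤ) (N : ℤ),
            h ^ 2 * ∫ z in (-ξ)..d,
              (‖f j s z‖ ^ 2 + ‖fz j s z‖ ^ 2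
                + ‖fzz j s z‖ ^ 2)) := by
  set K := 2 + 128 / h ^ 4
  have hK₀ : 0 < K := by positivity
  have hab : -ξ ≤ d := by linarith
  refine ⟨(2 * (1 + (d + ξ) * K * exp (K * (d + ξ))))⁻¹, by positivity, K, hK₀, ?_⟩
  intro f fz fzz hf hfz hfzz hsupp ha haz
  have hfc j s : Continuous (f j s) := continuous_of_forall_hasDerivAt (hf j s)
  have hfzc j s : Continuous (fz j s) := continuous_of_forall_hasDerivAt (hfz j s)
  have hLc := continuous_discLap (h := h) hfc hfzz
  rw [sum_sum_mul_integral (q := fun j s z => ‖f j s z‖ ^ 2 + ‖fz j s z‖ ^ 2 + ‖fzz j s z‖ ^ 2) _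
      fun j s => (by fun_prop : Continuous _).intervalIntegrable _ _,
    sum_sum_mul_integral (q := fun j s z => ‖discLap h f fzz j s z‖ ^ 2) _
      fun j s => (by fun_prop : Continuous _).intervalIntegrable _ _]
  simp only [sum_add_distrib]
  have hlow := integral_gridNormSq_le (h := h) (K := K) hab le_rfl hf hfz hfzz hsupp ha haz
  have hup := integral_gridNormSq_discLap_le (h := h) hab hfc hfzc hfzz hsupp
  simp only [gridNormSq, sub_neg_eq_add] at hlow hup
  constructor
  · rw [inv_mul_le_iff₀ (by positivity), mul_left_comm]
    exact mul_le_mul_of_nonneg_left hlow (sq_nonneg h)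
  · rw [mul_left_comm]
    exact mul_le_mul_of_nonneg_left hup (sq_nonneg h)

/-- Equivalence of the norm `Σ h² ∫ |Δʰf|²` with the full semidiscrete `H²`-norm on the
space `H₀^{2,h}` of grid functions with `f = f_z = 0` at `z = −ξ` and vanishing at boundary
grid points: there are `c₁, c₂ > 0` (depending on `ξ, d, h, N`) with
`c₁‖f‖²_{H^{2,h}} ≤ Σ h² ∫ |Δʰf|² ≤ c₂‖f‖²_{H^{2,h}}`. -/
theorem discLap_norm_equiv (ξ d h : ℝ) (N : ℕ) (hξ : 0 < ξ) (hd : 0 < d) (hh : 0 < h) :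
    ∃ c₁ > (0 : ℝ), ∃ c₂ > (0 : ℝ), ∀ f fz fzz : ℤ → ℤ → ℝ → ℂ,
      (∀ j s z, HasDerivAt (f j s) (fz j s z) z) →
      (∀ j s z, HasDerivAt (fz j s) (fzz j s z) z) →
      (∀ j s, Continuous (fzz j s)) →
      (∀ j s z, (j ∉ Finset.Icc (1 : ℤ) (N : ℤ) ∨ s ∉ Finset.Icc (1 : ℤ) (N : ℤ)) →
        f j s z = 0) →
      (∀ j s, f j s (-ξ) = 0) → (∀ j s, fz j s (-ξ) = 0) →
      c₁ * (∑ j ∈ Finset.Icc (1 : ℤ) (N : ℤ), ∑ s ∈ Finset.Icc (1 : ℤ) (N : ℤ),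
            h ^ 2 * ∫ z in (-ξ)..d,
              (‖f j s z‖ ^ 2 + ‖fz j s z‖ ^ 2
                + ‖fzz j s z‖ ^ 2)) ≤
        (∑ j ∈ Finset.Icc (1 : ℤ) (N : ℤ), ∑ s ∈ Finset.Icc (1 : ℤ) (N : ℤ),
            h ^ 2 * ∫ z in (-ξ)..d, ‖discLap h f fzz j s z‖ ^ 2) ∧
      (∑ j ∈ Finset.Icc (1 : ℤ) (N : ℤ), ∑ s ∈ Finset.Icc (1 : ℤ) (N : ℤ),
            h ^ 2 * ∫ z in (-ξ)..d, ‖discLap h f fzz j s z‖ ^ 2) ≤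
        c₂ * (∑ j ∈ Finset.Icc (1 : ℤ) (N : ℤ), ∑ s ∈ Finset.Icc (1 : ℤ) (N : ℤ),
            h ^ 2 * ∫ z in (-ξ)..d,
              (‖f j s z‖ ^ 2 + ‖fz j s z‖ ^ 2
                + ‖fzz j s z‖ ^ 2)) :=
  discLap_norm_equiv_general ξ d h N hξ hd
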